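/- arXiv:2506.12521 — 3 statements merged into one kernel-verified Lean document; each statement's English description precedes it below -/
import Mathlib

section
/- Let A be a C-hyperideal of a commutative multiplicative hyperring G and S an MCS with A ∩ S = ∅. If A is a weakly quasi S-primary hyperideal of G and the zero hyperideal ⟨0⟩ is a quasi S-primary C-hyperideal of G, then rad(A) is an S-prime hyperideal of G. -/
open Set

/-- A commutative multiplicative hyperring: a commutative additive group with a
commutative, associative hyperoperation `hmul` satisfying `(-a)∘b = -(a∘b)`,
weak distributivity, and having an identity element `e` with `a ∈ e∘a`. -/
class MulHyperring (G : Type*) extends AddCommGroup G where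
  hmul : G → G → Set G
  hmul_nonempty : ∀ a b : G, (hmul a b).Nonempty
  hmul_comm : ∀ a b : G, hmul a b = hmul b a
  hmul_assoc : ∀ a b c : G, (⋃ x ∈ hmul a b, hmul x c) = ⋃ x ∈ hmul b c, hmul a x
  neg_hmul : ∀ a b : G, hmul (-a) b = (fun x => -x) '' (hmul a b)
  hmul_add : ∀ a b c : G,
    hmul a (b + c) ⊆ {x | ∃ u ∈ hmul a b, ∃ v ∈ hmul a c, x = u + v}
  e : G
  e_mem : ∀ a : G, a ∈ hmul e a

namespace MulHyperring

variable {G : Type*} [MulHyperring G]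

/-- Hyperproduct of an element with a set: `a ∘ B = ⋃ b ∈ B, a ∘ b`. -/
def smulSet (a : G) (B : Set G) : Set G := ⋃ b ∈ B, hmul a b

/-- Hyperproduct of two sets. -/
def setMul (A B : Set G) : Set G := ⋃ a ∈ A, ⋃ b ∈ B, hmul a b

/-- Hyperproduct `a₁ ∘ a₂ ∘ ⋯ ∘ aₙ` of a (nonempty) list of elements. -/
def hProd : List G → Set G
  | [] => ∅
  | [a] => {a}
  | a :: b :: l => smulSet a (hProd (b :: l))

/-- `aⁿ` as a hyperproduct. -/
def hPow (a : G) (n : ℕ) : Set G := hProd (List.replicate n a)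

/-- `A` is a hyperideal of `G`. -/
def IsHyperideal (A : Set G) : Prop :=
  A.Nonempty ∧ (∀ x ∈ A, ∀ y ∈ A, x - y ∈ A) ∧ ∀ r : G, ∀ x ∈ A, hmul r x ⊆ A

/-- `A` is a `C`-hyperideal: any finite hyperproduct meeting `A` is contained in `A`. -/
def IsCHyperideal (A : Set G) : Prop :=
  IsHyperideal A ∧ ∀ l : List G, l ≠ [] → (hProd l ∩ A).Nonempty → hProd l ⊆ A

/-- The radical of a (C-)hyperideal: `{a | aⁿ ⊆ A for some n ≥ 1}`. -/
def rad (A : Set G) : Set G := {a | ∃ n : ℕ, 1 ≤ n ∧ hPow a n ⊆ A}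

/-- The hyperideal generated by a set. -/
def idealGen (X : Set G) : Set G := ⋂₀ {A | IsHyperideal A ∧ X ⊆ A}

/-- The hyperideal product of two hyperideals. -/
def idealMul (A B : Set G) : Set G := idealGen (setMul A B)

/-- Multiplicative closed subset. -/
def IsMCS (S : Set G) : Prop :=
  e ∈ S ∧ ∀ s₁ ∈ S, ∀ s₂ ∈ S, (hmul s₁ s₂ ∩ S).Nonempty

/-- Prime hyperideal. -/
def IsPrime (P : Set G) : Prop :=
  IsHyperideal P ∧ P ≠ univ ∧ ∀ x y : G, hmul x y ⊆ P → x ∈ P ∨ y ∈ P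

/-- `S`-prime hyperideal. -/
def IsSPrime (S A : Set G) : Prop :=
  IsHyperideal A ∧ A ∩ S = ∅ ∧
    ∃ t ∈ S, ∀ u v : G, hmul u v ⊆ A → hmul t u ⊆ A ∨ hmul t v ⊆ A

/-- `S`-primary hyperideal. -/
def IsSPrimary (S A : Set G) : Prop :=
  IsHyperideal A ∧ A ∩ S = ∅ ∧
    ∃ t ∈ S, ∀ u v : G, hmul u v ⊆ A → hmul t u ⊆ A ∨ hmul t v ⊆ rad A

/-- Quasi `S`-primary hyperideal. -/
def IsQuasiSPrimary (S A : Set G) : Prop :=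
  IsHyperideal A ∧ A ∩ S = ∅ ∧
    ∃ t ∈ S, ∀ u v : G, hmul u v ⊆ A → hmul t u ⊆ rad A ∨ hmul t v ⊆ rad A

/-- Weakly quasi `S`-primary hyperideal. -/
def IsWeaklyQuasiSPrimary (S A : Set G) : Prop :=
  IsHyperideal A ∧ A ∩ S = ∅ ∧
    ∃ t ∈ S, ∀ u v : G, 0 ∉ hmul u v → hmul u v ⊆ A →
      hmul t u ⊆ rad A ∨ hmul t v ⊆ rad A

/-- Strongly quasi `S`-primary hyperideal. -/
def IsStronglyQuasiSPrimary (S A : Set G) : Prop :=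
  IsHyperideal A ∧ A ∩ S = ∅ ∧
    ∃ t ∈ S, ∀ u v : G, hmul u v ⊆ A →
      smulSet t (hPow u 2) ⊆ A ∨ hmul t v ⊆ rad A

/-- The residual `(B : x) = {y | y ∘ x ⊆ B}`. -/
def colon (B : Set G) (x : G) : Set G := {y | hmul y x ⊆ B}

end MulHyperring

/-! Take `t ∈ (t₁ ∘ t₂) ∩ S`, where `t₁` and `t₂` witness the conditions on `A` and `⟨0⟩`. If `a ∘ b ⊆ A`, then
either `0 ∉ a ∘ b` and the weak condition applies, or `0 ∈ a ∘ b`, so `a ∘ b ⊆ ⟨0⟩` because `⟨0⟩`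
is a `C`-hyperideal, and the condition on `⟨0⟩` applies since `rad ⟨0⟩ ⊆ rad A`; hence `A` is
quasi `S`-primary with witness `t`. Now let `u ∘ v ⊆ rad A` and `w ∈ u ∘ v` with `wⁿ ⊆ A`. Since
`wⁿ ⊆ uⁿ ∘ vⁿ` and `A` is a `C`-hyperideal, `a ∘ b ⊆ A` for some `a ∈ uⁿ`, `b ∈ vⁿ`, so say
`t ∘ a ⊆ rad A`. Then `t ∘ uⁿ` meets, hence lies in, the `C`-hyperideal `rad A`, and every
`z ∈ t ∘ u` has `zⁿ ⊆ tⁿ⁻¹ ∘ (t ∘ uⁿ) ⊆ rad A`, so `z ∈ rad (rad A) = rad A`. That `rad A` is a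
hyperideal follows from a binomial expansion of `(a - b)ᵐ⁺ⁿ`. -/

theorem List.length_le_count_add_count {α : Type*} [BEq α] [LawfulBEq α] {l : List α} {a b : α}
    (h : ∀ x ∈ l, x = a ∨ x = b) : l.length ≤ l.count a + l.count b := by
  rw [List.length_eq_countP_add_countP (· == a)]
  have := List.countP_mono_left (l := l) (p := fun x => decide ¬(x == a) = true) (q := (· == b))
    (by intro x hx; rcases h x hx with rfl | rfl <;> simp)
  simp only [List.count] at *
  omega

namespace MulHyperring

variable {G : Type*} [MulHyperring G]

@[simp]
lemma mem_setMul {A B : Set G} {z : G} : z ∈ setMul A B ↔ ∃ a ∈ A, ∃ b ∈ B, z ∈ hmul a b := by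
  simp [setMul]

@[simp]
lemma mem_smulSet {a : G} {B : Set G} {z : G} : z ∈ smulSet a B ↔ ∃ b ∈ B, z ∈ hmul a b := by
  simp [smulSet]

lemma smulSet_eq_setMul (a : G) (B : Set G) : smulSet a B = setMul {a} B := by
  simp [smulSet, setMul]

lemma setMul_comm (A B : Set G) : setMul A B = setMul B A := by
  ext z
  simp only [mem_setMul]
  constructor <;> rintro ⟨a, ha, b, hb, hz⟩ <;> exact ⟨b, hb, a, ha, by rwa [hmul_comm]⟩

lemma setMul_assoc (A B C : Set G) : setMul (setMul A B) C = setMul A (setMul B C) := by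
  ext z
  simp only [mem_setMul]
  constructor
  · rintro ⟨x, ⟨a, ha, b, hb, hx⟩, c, hc, hz⟩
    have h : z ∈ ⋃ x ∈ hmul a b, hmul x c := mem_biUnion hx hz
    rw [hmul_assoc] at h
    obtain ⟨y, hy, hz⟩ := mem_iUnion₂.mp h
    exact ⟨a, ha, y, ⟨b, hb, c, hc, hy⟩, hz⟩
  · rintro ⟨a, ha, y, ⟨b, hb, c, hc, hy⟩, hz⟩
    have h : z ∈ ⋃ y ∈ hmul b c, hmul a y := mem_biUnion hy hz
    rw [← hmul_assoc] at h
    obtain ⟨x, hx, hz⟩ := mem_iUnion₂.mp h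
    exact ⟨x, ⟨a, ha, b, hb, hx⟩, c, hc, hz⟩

lemma setMul_mono {A A' B B' : Set G} (hA : A ⊆ A') (hB : B ⊆ B') :
    setMul A B ⊆ setMul A' B' := by
  simp only [subset_def, mem_setMul]
  rintro z ⟨a, ha, b, hb, hz⟩
  exact ⟨a, hA ha, b, hB hb, hz⟩

@[simp]
lemma hProd_singleton (a : G) : hProd [a] = {a} := rfl

lemma hProd_cons (a : G) {l : List G} (hl : l ≠ []) : hProd (a :: l) = smulSet a (hProd l) := by
  obtain ⟨b, l, rfl⟩ := List.exists_cons_of_ne_nil hl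
  rfl

@[simp]
lemma hProd_pair (a b : G) : hProd [a, b] = hmul a b := by
  simp [hProd_cons, smulSet]

lemma hProd_triple (a b c : G) : hProd [a, b, c] = ⋃ x ∈ hmul a b, hmul x c := by
  rw [hmul_assoc, hProd_cons _ (by simp), hProd_pair, smulSet]

lemma hProd_append {l₁ l₂ : List G} (h₁ : l₁ ≠ []) (h₂ : l₂ ≠ []) :
    hProd (l₁ ++ l₂) = setMul (hProd l₁) (hProd l₂) := by
  induction l₁ with
  | nil => contradiction
  | cons a l ih =>
    rcases eq_or_ne l [] with rfl | hl
    · rw [List.singleton_append, hProd_cons a h₂, smulSet_eq_setMul, hProd_singleton]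
    · rw [List.cons_append, hProd_cons a (by simp [hl]), ih hl, hProd_cons a hl,
        smulSet_eq_setMul, smulSet_eq_setMul, setMul_assoc]

lemma hProd_nonempty {l : List G} (hl : l ≠ []) : (hProd l).Nonempty := by
  induction l with
  | nil => contradiction
  | cons a l ih =>
    rcases eq_or_ne l [] with rfl | hl
    · exact ⟨a, rfl⟩
    · obtain ⟨w, hw⟩ := ih hl
      obtain ⟨z, hz⟩ := hmul_nonempty a w
      exact ⟨z, by rw [hProd_cons a hl]; exact mem_smulSet.mpr ⟨w, hw, hz⟩⟩

lemma hProd_perm {l l' : List G} (h : l.Perm l') : hProd l = hProd l' := by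
  induction h with
  | nil => rfl
  | @cons a l₁ l₂ h ih =>
    rcases eq_or_ne l₁ [] with rfl | h₁
    · rw [h.nil_eq]
    · rw [hProd_cons a h₁, hProd_cons a (by rintro rfl; exact h₁ h.eq_nil), ih]
  | swap a b l =>
    rcases eq_or_ne l [] with rfl | hl
    · rw [hProd_pair, hProd_pair, hmul_comm]
    · simp only [hProd_cons _ (List.cons_ne_nil _ _), hProd_cons _ hl, smulSet_eq_setMul,
        ← setMul_assoc, setMul_comm {b} {a}]
  | trans _ _ ih₁ ih₂ => rw [ih₁, ih₂]

lemma hPow_one (a : G) : hPow a 1 = {a} := rfl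

lemma hPow_succ (a : G) {n : ℕ} (hn : 1 ≤ n) : hPow a (n + 1) = smulSet a (hPow a n) :=
  hProd_cons a (by simp; omega)

lemma hPow_nonempty (a : G) {n : ℕ} (hn : 1 ≤ n) : (hPow a n).Nonempty :=
  hProd_nonempty (by simp; omega)

lemma hPow_subset_hProd_flatMap {l : List G} {w : G} (hw : w ∈ hProd l) :
    ∀ k, hPow w k ⊆ hProd (l.flatMap (List.replicate k))
  | 0 => by simp [hPow, hProd]
  | 1 => by
    change {w} ⊆ hProd (l.flatMap fun x => [x])
    simpa [List.flatMap_singleton'] using hw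
  | k + 2 => by
    have hl : l ≠ [] := by rintro rfl; exact hw
    have hlk : l.flatMap (List.replicate (k + 1)) ≠ [] := by
      obtain ⟨a, l, rfl⟩ := List.exists_cons_of_ne_nil hl
      simp
    have hperm : (l ++ l.flatMap (List.replicate (k + 1))).Perm
        (l.flatMap (List.replicate (k + 2))) := by
      have := List.flatMap_append_perm l (fun x => [x]) (List.replicate (k + 1))
      rwa [List.flatMap_singleton'] at this
    rw [hPow_succ w (by omega), smulSet_eq_setMul, ← hProd_perm hperm, hProd_append hl hlk]
    exact setMul_mono (singleton_subset_iff.mpr hw) (hPow_subset_hProd_flatMap hw (k + 1))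

lemma hmul_neg_left (a b : G) : hmul (-a) b = hmul a (-b) := by
  rw [hmul_comm a, neg_hmul, neg_hmul, hmul_comm]

lemma mem_neg_hmul {a b z : G} : z ∈ hmul (-a) b ↔ -z ∈ hmul a b := by
  rw [neg_hmul]
  constructor
  · rintro ⟨x, hx, rfl⟩
    simpa using hx
  · exact fun h => ⟨-z, h, neg_neg z⟩

lemma mem_or_neg_mem_hPow_of_mem_hPow_neg {x w : G} {n : ℕ} (hn : 1 ≤ n)
    (hw : w ∈ hPow (-x) n) : w ∈ hPow x n ∨ -w ∈ hPow x n := by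
  induction n, hn using Nat.le_induction generalizing w with
  | base => exact Or.inr (by simp_all [hPow_one])
  | succ n hn ih =>
    rw [hPow_succ _ hn, mem_smulSet] at hw
    obtain ⟨v, hv, hwv⟩ := hw
    rw [hPow_succ _ hn, mem_smulSet, mem_smulSet]
    rcases ih hv with hv | hv
    · exact Or.inr ⟨v, hv, mem_neg_hmul.mp hwv⟩
    · exact Or.inl ⟨-v, hv, by rwa [← hmul_neg_left]⟩

lemma hPow_add_subset {T : Set G} (hT : ∀ a ∈ T, ∀ b ∈ T, a + b ∈ T) {x y : G} {N : ℕ}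
    (hN : 1 ≤ N) (h : ∀ l : List G, l.length = N → (∀ a ∈ l, a = x ∨ a = y) → hProd l ⊆ T) :
    hPow (x + y) N ⊆ T := by
  induction N, hN using Nat.le_induction generalizing T with
  | base =>
    have hx := h [x] rfl (by simp)
    have hy := h [y] rfl (by simp)
    simp only [hPow_one, singleton_subset_iff, hProd_singleton] at hx hy ⊢
    exact hT x hx y hy
  | succ N hN ih =>
    -- The induction runs over all `T` at once: weak distributivity makes `T'` additively closed.
    let T' := {w | hmul x w ⊆ T ∧ hmul y w ⊆ T}
    have hT' : ∀ a ∈ T', ∀ b ∈ T', a + b ∈ T' := by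
      rintro a ⟨hax, hay⟩ b ⟨hbx, hby⟩
      constructor
      · intro z hz
        obtain ⟨u, hu, v, hv, rfl⟩ := hmul_add x a b hz
        exact hT u (hax hu) v (hbx hv)
      · intro z hz
        obtain ⟨u, hu, v, hv, rfl⟩ := hmul_add y a b hz
        exact hT u (hay hu) v (hby hv)
    have h' : ∀ l : List G, l.length = N → (∀ a ∈ l, a = x ∨ a = y) → hProd l ⊆ T' := by
      intro l hlen hl w hw
      have hne : l ≠ [] := by rintro rfl; simp at hlen; omega
      constructor
      · intro z hz
        refine h (x :: l) (by simp [hlen]) (List.forall_mem_cons.mpr ⟨Or.inl rfl, hl⟩) ?_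
        rw [hProd_cons x hne]
        exact mem_smulSet.mpr ⟨w, hw, hz⟩
      · intro z hz
        refine h (y :: l) (by simp [hlen]) (List.forall_mem_cons.mpr ⟨Or.inr rfl, hl⟩) ?_
        rw [hProd_cons y hne]
        exact mem_smulSet.mpr ⟨w, hw, hz⟩
    rw [hPow_succ _ hN]
    intro z hz
    obtain ⟨w, hw, hz⟩ := mem_smulSet.mp hz
    obtain ⟨hwx, hwy⟩ := ih hT' h' hw
    rw [hmul_comm] at hz
    obtain ⟨u, hu, v, hv, rfl⟩ := hmul_add w x y hz
    exact hT u (hwx (by rwa [hmul_comm])) v (hwy (by rwa [hmul_comm]))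

lemma rad_mono {A B : Set G} (h : A ⊆ B) : rad A ⊆ rad B := by
  rintro a ⟨n, hn, ha⟩
  exact ⟨n, hn, ha.trans h⟩

namespace IsHyperideal

variable {A : Set G}

lemma zero_mem (hA : IsHyperideal A) : 0 ∈ A := by
  obtain ⟨⟨x, hx⟩, hsub, -⟩ := hA
  simpa using hsub x hx x hx

lemma neg_mem (hA : IsHyperideal A) {x : G} (hx : x ∈ A) : -x ∈ A := by
  simpa using hA.2.1 0 hA.zero_mem x hx

lemma add_mem (hA : IsHyperideal A) {x y : G} (hx : x ∈ A) (hy : y ∈ A) : x + y ∈ A := by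
  simpa using hA.2.1 x hx (-y) (hA.neg_mem hy)

lemma setMul_subset (hA : IsHyperideal A) (B : Set G) {C : Set G} (hC : C ⊆ A) :
    setMul B C ⊆ A := by
  simp only [subset_def, mem_setMul]
  rintro z ⟨b, -, c, hc, hz⟩
  exact hA.2.2 b c (hC hc) hz

lemma hProd_subset_of_sublist (hA : IsHyperideal A) {l₁ l : List G} (hsub : l₁.Sublist l)
    (hl₁ : l₁ ≠ []) (h : hProd l₁ ⊆ A) : hProd l ⊆ A := by
  obtain ⟨l₂, hperm⟩ := hsub.exists_perm_append
  rw [hProd_perm hperm]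
  rcases eq_or_ne l₂ [] with rfl | hl₂
  · rwa [List.append_nil]
  · rw [hProd_append hl₁ hl₂, setMul_comm]
    exact hA.setMul_subset _ h

lemma hmul_subset_of_mem_hmul (hA : IsHyperideal A) {t t₁ t₂ a : G} (ht : t ∈ hmul t₁ t₂)
    (h : hmul t₁ a ⊆ A) : hmul t a ⊆ A :=
  calc hmul t a ⊆ hProd [t₁, t₂, a] := by
        rw [hProd_triple]
        exact subset_biUnion_of_mem (u := fun x => hmul x a) ht
    _ = setMul {t₂} (hmul t₁ a) := by
        rw [hProd_perm (List.Perm.swap t₂ t₁ [a]), hProd_cons _ (by simp), hProd_pair,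
          smulSet_eq_setMul]
    _ ⊆ A := hA.setMul_subset _ h

lemma sub_mem_rad (hA : IsHyperideal A) {a b : G} (ha : a ∈ rad A) (hb : b ∈ rad A) :
    a - b ∈ rad A := by
  classical
  obtain ⟨m, hm, ha⟩ := ha
  obtain ⟨n, hn, hb⟩ := hb
  have hb' : hPow (-b) n ⊆ A := fun w hw =>
    (mem_or_neg_mem_hPow_of_mem_hPow_neg hn hw).elim (fun h => hb h)
      (fun h => neg_neg w ▸ hA.neg_mem (hb h))
  refine ⟨m + n, by omega, ?_⟩
  rw [sub_eq_add_neg]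
  refine hPow_add_subset (fun _ hu _ hv => hA.add_mem hu hv) (by omega) fun l hlen hl => ?_
  have hcount := List.length_le_count_add_count hl
  rcases le_or_gt m (l.count a) with h | h
  · exact hA.hProd_subset_of_sublist (List.replicate_sublist_iff.mpr h) (by simp; omega) ha
  · exact hA.hProd_subset_of_sublist (List.replicate_sublist_iff.mpr (by omega : n ≤ _))
      (by simp; omega) hb'

lemma hmul_subset_rad (hA : IsHyperideal A) (r : G) {x : G} (hx : x ∈ rad A) :
    hmul r x ⊆ rad A := by
  obtain ⟨n, hn, hx⟩ := hx
  intro z hz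
  refine ⟨n, hn, (hPow_subset_hProd_flatMap (l := [r, x]) (by simpa using hz) n).trans ?_⟩
  simp only [List.flatMap_cons, List.flatMap_nil, List.append_nil]
  exact hA.hProd_subset_of_sublist (List.sublist_append_right _ _) (by simp; omega) hx

protected lemma rad (hA : IsHyperideal A) : IsHyperideal (rad A) :=
  ⟨⟨0, 1, le_rfl, by simpa [hPow_one] using hA.zero_mem⟩, fun _ ha _ hb => hA.sub_mem_rad ha hb,
    hA.hmul_subset_rad⟩

end IsHyperideal

namespace IsCHyperideal

variable {A : Set G}

lemma hmul_subset (hA : IsCHyperideal A) {a b z : G} (hz : z ∈ hmul a b) (hzA : z ∈ A) :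
    hmul a b ⊆ A := by
  simpa using hA.2 [a, b] (by simp) ⟨z, by simpa using hz, hzA⟩

lemma hProd_flatMap_subset (hA : IsCHyperideal A) {l : List G} {w : G} (hw : w ∈ hProd l)
    {k : ℕ} (hk : 1 ≤ k) (hwk : hPow w k ⊆ A) : hProd (l.flatMap (List.replicate k)) ⊆ A := by
  obtain ⟨y, hy⟩ := hPow_nonempty w hk
  have hy' := hPow_subset_hProd_flatMap hw k hy
  exact hA.2 _ (by rintro h; rw [h] at hy'; exact hy') ⟨y, hy', hwk hy⟩

lemma rad_rad_subset (hA : IsCHyperideal A) : rad (rad A) ⊆ rad A := by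
  rintro z ⟨n, hn, hz⟩
  obtain ⟨w, hw⟩ := hPow_nonempty z hn
  obtain ⟨k, hk, hwk⟩ := hz hw
  refine ⟨n * k, Nat.one_le_iff_ne_zero.mpr (by positivity), ?_⟩
  have := hA.hProd_flatMap_subset hw hk hwk
  rwa [List.flatMap_replicate, List.flatten_replicate_replicate] at this

protected lemma rad (hA : IsCHyperideal A) : IsCHyperideal (rad A) := by
  refine ⟨hA.1.rad, fun l _ ⟨w₀, hw₀, k, hk, hw₀k⟩ w hw => ⟨k, hk, ?_⟩⟩
  exact (hPow_subset_hProd_flatMap hw k).trans (hA.hProd_flatMap_subset hw₀ hk hw₀k)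

lemma exists_hmul_subset_of_hmul_subset_rad (hA : IsCHyperideal A) {u v : G}
    (huv : hmul u v ⊆ rad A) : ∃ n, 1 ≤ n ∧ ∃ a ∈ hPow u n, ∃ b ∈ hPow v n, hmul a b ⊆ A := by
  obtain ⟨w, hw⟩ := hmul_nonempty u v
  obtain ⟨n, hn, hwn⟩ := huv hw
  have huvn := hA.hProd_flatMap_subset (l := [u, v]) (by simpa using hw) hn hwn
  simp only [List.flatMap_cons, List.flatMap_nil, List.append_nil] at huvn
  rw [hProd_append (by simp; omega) (by simp; omega)] at huvn
  obtain ⟨a, ha⟩ := hPow_nonempty u hn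
  obtain ⟨b, hb⟩ := hPow_nonempty v hn
  exact ⟨n, hn, a, ha, b, hb, fun z hz => huvn (mem_setMul.mpr ⟨a, ha, b, hb, hz⟩)⟩

lemma hmul_subset_rad_of_mem_hPow (hA : IsCHyperideal A) {t u a : G} {n : ℕ} (hn : 1 ≤ n)
    (ha : a ∈ hPow u n) (h : hmul t a ⊆ rad A) : hmul t u ⊆ rad A := by
  have htun : hProd (t :: List.replicate n u) ⊆ rad A := by
    obtain ⟨z, hz⟩ := hmul_nonempty t a
    refine hA.rad.2 _ (List.cons_ne_nil _ _) ⟨z, ?_, h hz⟩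
    rw [hProd_cons t (by simp; omega)]
    exact mem_smulSet.mpr ⟨a, ha, hz⟩
  intro z hz
  refine hA.rad_rad_subset ⟨n, hn, ?_⟩
  refine (hPow_subset_hProd_flatMap (l := [t, u]) (by simpa using hz) n).trans ?_
  simp only [List.flatMap_cons, List.flatMap_nil, List.append_nil]
  refine hA.1.rad.hProd_subset_of_sublist ?_ (List.cons_ne_nil _ _) htun
  exact (List.singleton_sublist.mpr (List.mem_replicate.mpr ⟨by omega, rfl⟩)).append
    (List.Sublist.refl _)

end IsCHyperideal

lemma IsMCS.hPow_inter_nonempty {S : Set G} (hS : IsMCS S) {s : G} (hs : s ∈ S) {n : ℕ}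
    (hn : 1 ≤ n) : (hPow s n ∩ S).Nonempty := by
  induction n, hn using Nat.le_induction with
  | base => exact ⟨s, rfl, hs⟩
  | succ n hn ih =>
    obtain ⟨w, hw, hwS⟩ := ih
    obtain ⟨z, hz, hzS⟩ := hS.2 s hs w hwS
    exact ⟨z, by rw [hPow_succ s hn]; exact mem_smulSet.mpr ⟨w, hw, hz⟩, hzS⟩

lemma IsMCS.rad_inter_eq_empty {S A : Set G} (hS : IsMCS S) (hAS : A ∩ S = ∅) :
    rad A ∩ S = ∅ := by
  refine eq_empty_iff_forall_notMem.mpr ?_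
  rintro s ⟨⟨n, hn, hsn⟩, hs⟩
  obtain ⟨w, hw, hwS⟩ := hS.hPow_inter_nonempty hs hn
  exact eq_empty_iff_forall_notMem.mp hAS w ⟨hsn hw, hwS⟩

lemma subset_idealGen (X : Set G) : X ⊆ idealGen X :=
  fun _ hx => mem_sInter.mpr fun _ hB => hB.2 hx

lemma idealGen_subset {X A : Set G} (hA : IsHyperideal A) (hXA : X ⊆ A) : idealGen X ⊆ A :=
  sInter_subset_of_mem ⟨hA, hXA⟩

lemma IsWeaklyQuasiSPrimary.isQuasiSPrimary {S A : Set G} (hS : IsMCS S)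
    (hw : IsWeaklyQuasiSPrimary S A) (h0C : IsCHyperideal (idealGen {0} : Set G))
    (h0 : IsQuasiSPrimary S (idealGen {0} : Set G)) : IsQuasiSPrimary S A := by
  obtain ⟨hA, hAS, t₁, ht₁S, ht₁⟩ := hw
  obtain ⟨-, -, t₂, ht₂S, ht₂⟩ := h0
  obtain ⟨t, ht, htS⟩ := hS.2 t₁ ht₁S t₂ ht₂S
  have ht' : t ∈ hmul t₂ t₁ := by rwa [hmul_comm]
  have h0A : rad (idealGen {0}) ⊆ rad A :=
    rad_mono (idealGen_subset hA (singleton_subset_iff.mpr hA.zero_mem))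
  refine ⟨hA, hAS, t, htS, fun a b hab => ?_⟩
  by_cases h0ab : (0 : G) ∈ hmul a b
  · have hab0 := h0C.hmul_subset h0ab (subset_idealGen _ rfl)
    exact (ht₂ a b hab0).imp (fun h => hA.rad.hmul_subset_of_mem_hmul ht' (h.trans h0A))
      (fun h => hA.rad.hmul_subset_of_mem_hmul ht' (h.trans h0A))
  · exact (ht₁ a b h0ab hab).imp (hA.rad.hmul_subset_of_mem_hmul ht)
      (hA.rad.hmul_subset_of_mem_hmul ht)

lemma IsQuasiSPrimary.rad_isSPrime {S A : Set G} (hS : IsMCS S) (hA : IsCHyperideal A)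
    (hq : IsQuasiSPrimary S A) : IsSPrime S (rad A) := by
  obtain ⟨-, hAS, t, htS, ht⟩ := hq
  refine ⟨hA.1.rad, hS.rad_inter_eq_empty hAS, t, htS, fun u v huv => ?_⟩
  obtain ⟨n, hn, a, ha, b, hb, hab⟩ := hA.exists_hmul_subset_of_hmul_subset_rad huv
  exact (ht a b hab).imp (hA.hmul_subset_rad_of_mem_hPow hn ha)
    (hA.hmul_subset_rad_of_mem_hPow hn hb)

end MulHyperring

open MulHyperring in
theorem weaklyQuasiSPrimary_rad_sPrime_general {G : Type*} [MulHyperring G] (A S : Set G) (hA : IsCHyperideal A)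
    (hS : IsMCS S)
    (hw : IsWeaklyQuasiSPrimary S A) (h0C : IsCHyperideal (idealGen {0} : Set G))
    (h0 : IsQuasiSPrimary S (idealGen {0} : Set G)) :
    IsSPrime S (rad A) :=
  (hw.isQuasiSPrimary hS h0C h0).rad_isSPrime hS hA

open MulHyperring in
theorem weaklyQuasiSPrimary_rad_sPrime {G : Type*} [MulHyperring G] (A S : Set G) (hA : IsCHyperideal A)
    (hS : IsMCS S) (hAS : A ∩ S = ∅)
    (hw : IsWeaklyQuasiSPrimary S A) (h0C : IsCHyperideal (idealGen {0} : Set G))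
    (h0 : IsQuasiSPrimary S (idealGen {0} : Set G)) :
    IsSPrime S (rad A) :=
  weaklyQuasiSPrimary_rad_sPrime_general A S hA hS hw h0C h0
end

section
/- Let A be a C-hyperideal of a commutative multiplicative hyperring G and S an MCS with A ∩ S = ∅. Then A is a strongly quasi S-primary hyperideal of G if and only if there exists t ∈ S such that for every u ∈ G, either u² ⊆ (A : t) or (A : u) ⊆ (rad(A) : t). -/
open Set

namespace MulHyperring

variable {G : Type*} [MulHyperring G]

theorem smulSet_subset_iff_subset_colon {A X : Set G} {t : G} :
    smulSet t X ⊆ A ↔ X ⊆ colon A t := by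
  simp only [smulSet, iUnion₂_subset_iff, hmul_comm t]
  rfl

theorem hmul_subset_iff_mem_colon {A : Set G} {u v : G} : hmul u v ⊆ A ↔ v ∈ colon A u := by
  rw [colon, mem_ofPred_eq, hmul_comm]

theorem forall_hmul_subset_imp_or_iff {A B : Set G} {t : G} {P : G → Prop} :
    (∀ u v, hmul u v ⊆ A → P u ∨ hmul t v ⊆ B) ↔ ∀ u, P u ∨ colon A u ⊆ colon B t := by
  refine forall_congr' fun u => ?_
  simp only [hmul_subset_iff_mem_colon]
  by_cases hu : P u <;> simp [hu, subset_def]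

end MulHyperring

open MulHyperring in
theorem stronglyQuasiSPrimary_iff_colon_general {G : Type*} [MulHyperring G] (A S : Set G) (hA : IsCHyperideal A)
    (hAS : A ∩ S = ∅) :
    IsStronglyQuasiSPrimary S A ↔
      ∃ t ∈ S, ∀ u : G, hPow u 2 ⊆ colon A t ∨ colon A u ⊆ colon (rad A) t := by
  simp only [IsStronglyQuasiSPrimary, smulSet_subset_iff_subset_colon,
    forall_hmul_subset_imp_or_iff, and_iff_right hA.1, and_iff_right hAS]

open MulHyperring in
theorem stronglyQuasiSPrimary_iff_colon {G : Type*} [MulHyperring G] (A S : Set G) (hA : IsCHyperideal A)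
    (hS : IsMCS S) (hAS : A ∩ S = ∅) :
    IsStronglyQuasiSPrimary S A ↔
      ∃ t ∈ S, ∀ u : G, hPow u 2 ⊆ colon A t ∨ colon A u ⊆ colon (rad A) t :=
  stronglyQuasiSPrimary_iff_colon_general A S hA hAS
end

section
/- Let G₁, G₂ be commutative multiplicative hyperrings, η : G₁ → G₂ a surjective hyperring good homomorphism, A₁ a C-hyperideal of G₁ with Ker(η) ⊆ A₁, and S an MCS of G₁ with 0 ∉ η(S). If A₁ is a strongly quasi S-primary hyperideal of G₁, then η(A₁) is a strongly quasi η(S)-primary hyperideal of G₂. -/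
open Set

namespace MulHyperring

/-- A hyperring good homomorphism. -/
structure IsGoodHom {G₁ G₂ : Type*} [MulHyperring G₁] [MulHyperring G₂]
    (η : G₁ → G₂) : Prop where
  map_add : ∀ a b : G₁, η (a + b) = η a + η b
  map_hmul : ∀ a b : G₁, η '' (hmul a b) = hmul (η a) (η b)
  map_e : η (e : G₁) = (e : G₂)

end MulHyperring

/-!
Because `Ker η ⊆ A₁`, the hyperideal `A₁` is saturated: `η ⁻¹' (η '' A₁) = A₁`. So a product
`η u ∘ η v ⊆ η(A₁)` pulls back to `u ∘ v ⊆ A₁`, and the strongly quasi `S`-primary alternative for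
`u, v` is pushed forward by `η`, which maps hyperproducts onto hyperproducts and radicals into
radicals.
-/

namespace MulHyperring

variable {G₁ G₂ : Type*} [MulHyperring G₁] [MulHyperring G₂] {η : G₁ → G₂}

namespace IsGoodHom

lemma map_sub (hη : IsGoodHom η) (x y : G₁) : η (x - y) = η x - η y :=
  _root_.map_sub (AddMonoidHom.mk' η hη.map_add) x y

lemma image_smulSet (hη : IsGoodHom η) (a : G₁) (B : Set G₁) :
    η '' smulSet a B = smulSet (η a) (η '' B) := by
  simp only [smulSet, image_iUnion₂, biUnion_image, hη.map_hmul]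

lemma image_hProd (hη : IsGoodHom η) : ∀ l : List G₁, η '' hProd l = hProd (l.map η)
  | [] => image_empty η
  | [a] => image_singleton
  | a :: b :: l => by
    rw [List.map_cons, List.map_cons, hProd, hProd, hη.image_smulSet, ← List.map_cons,
      hη.image_hProd (b :: l)]

lemma image_hPow (hη : IsGoodHom η) (a : G₁) (n : ℕ) : η '' hPow a n = hPow (η a) n := by
  rw [hPow, hPow, hη.image_hProd, List.map_replicate]

lemma image_rad_subset (hη : IsGoodHom η) (A : Set G₁) : η '' rad A ⊆ rad (η '' A) := by
  rintro _ ⟨a, ⟨n, hn, hpow⟩, rfl⟩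
  exact ⟨n, hn, hη.image_hPow a n ▸ image_mono hpow⟩

end IsGoodHom

lemma IsHyperideal.zero_mem_s19 {A : Set G₁} (hA : IsHyperideal A) : (0 : G₁) ∈ A := by
  obtain ⟨x, hx⟩ := hA.1
  simpa using hA.2.1 x hx x hx

lemma IsHyperideal.add_mem_s19 {A : Set G₁} (hA : IsHyperideal A) {x y : G₁} (hx : x ∈ A)
    (hy : y ∈ A) : x + y ∈ A := by
  have hny : -y ∈ A := by simpa using hA.2.1 0 hA.zero_mem_s19 y hy
  simpa using hA.2.1 x hx (-y) hny

lemma IsHyperideal.image (hη : IsGoodHom η) (hsurj : Function.Surjective η) {A : Set G₁}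
    (hA : IsHyperideal A) : IsHyperideal (η '' A) := by
  refine ⟨hA.1.image η, ?_, ?_⟩
  · rintro _ ⟨x, hx, rfl⟩ _ ⟨y, hy, rfl⟩
    exact ⟨x - y, hA.2.1 x hx y hy, hη.map_sub x y⟩
  · rintro r _ ⟨a, ha, rfl⟩
    obtain ⟨r, rfl⟩ := hsurj r
    exact hη.map_hmul r a ▸ image_mono (hA.2.2 r a ha)

lemma IsHyperideal.preimage_image_eq (hη : IsGoodHom η) {A : Set G₁} (hA : IsHyperideal A)
    (hker : {x : G₁ | η x = 0} ⊆ A) : η ⁻¹' (η '' A) = A := by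
  refine subset_antisymm ?_ (subset_preimage_image η A)
  rintro w ⟨a, ha, haw⟩
  have hwa : w - a ∈ A := hker (by rw [mem_ofPred_eq, hη.map_sub, haw, sub_self])
  simpa using hA.add_mem_s19 hwa ha

end MulHyperring

open MulHyperring in
theorem stronglyQuasiSPrimary_image_general {G₁ G₂ : Type*} [MulHyperring G₁] [MulHyperring G₂]
    (η : G₁ → G₂) (hη : IsGoodHom η) (hsurj : Function.Surjective η)
    (A₁ : Set G₁) (hker : {x : G₁ | η x = 0} ⊆ A₁)
    (S : Set G₁)
    (h : IsStronglyQuasiSPrimary S A₁) :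
    IsStronglyQuasiSPrimary (η '' S) (η '' A₁) := by
  obtain ⟨hA, hdisj, t, htS, ht⟩ := h
  have hpre := hA.preimage_image_eq hη hker
  refine ⟨hA.image hη hsurj, ?_, η t, mem_image_of_mem η htS, ?_⟩
  · rw [← image_preimage_inter, hpre, hdisj, image_empty]
  · intro u v huv
    obtain ⟨u, rfl⟩ := hsurj u
    obtain ⟨v, rfl⟩ := hsurj v
    have huvA : hmul u v ⊆ A₁ := by rwa [← hpre, ← image_subset_iff, hη.map_hmul]
    refine (ht u v huvA).imp (fun htu => ?_) (fun htv => ?_)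
    · rw [← hη.image_hPow, ← hη.image_smulSet]
      exact image_mono htu
    · rw [← hη.map_hmul]
      exact (image_mono htv).trans (hη.image_rad_subset A₁)

open MulHyperring in
theorem stronglyQuasiSPrimary_image {G₁ G₂ : Type*} [MulHyperring G₁] [MulHyperring G₂]
    (η : G₁ → G₂) (hη : IsGoodHom η) (hsurj : Function.Surjective η)
    (A₁ : Set G₁) (hA₁ : IsCHyperideal A₁) (hker : {x : G₁ | η x = 0} ⊆ A₁)
    (S : Set G₁) (hS : IsMCS S) (h0 : (0 : G₂) ∉ η '' S)
    (h : IsStronglyQuasiSPrimary S A₁) :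
    IsStronglyQuasiSPrimary (η '' S) (η '' A₁) :=
  stronglyQuasiSPrimary_image_general η hη hsurj A₁ hker S h
end
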